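/- Let L be the Bell rule operator and for natural numbers n and b ≥ 1 set f_n^{(b)} = (L^n(X^b)) evaluated at X = 1. Then for every b ≥ 1 and every n, f_n^{(b+1)} = Σ_{k=0}^{n} C(n,k) · f_k^{(b)}. (Equivalently, in terms of exponential generating functions, f^{(b+1)}(x) = e^x · f^{(b)}(x), so f^{(b)} is the (b−1)-fold binomial transform of the Bell number sequence f^{(1)} and has exponential generating function e^{e^x + (b-1)x − 1}.) -/

import Mathlib

/-!
On the span `S` (`spanPosPow`) of the positive powers of `X`, the rule
`L(X^k) = (k - 1) X^k + X^{k+1}` gives the intertwining relation `L (X * p) = X * (L + 1) p`,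
and `L` maps `S` into itself. Iterating,
`L^n (X^{b+1}) = X * (L + 1)^n (X^b)`; expanding `(L + 1)^n` by the binomial theorem and evaluating
at `X = 1`, where the factor `X` disappears, gives the binomial transform.
-/

open Polynomial

namespace BellRule

variable {R : Type*} [CommRing R]

variable (R) in
noncomputable def spanPosPow : Submodule R R[X] :=
  Submodule.span R (Set.range fun j : ℕ => X ^ (j + 1))

lemma X_pow_mem_spanPosPow {b : ℕ} (hb : 1 ≤ b) : (X : R[X]) ^ b ∈ spanPosPow R := by
  obtain ⟨j, rfl⟩ := Nat.exists_eq_add_of_le' hb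
  exact Submodule.subset_span ⟨j, rfl⟩

variable (L : Module.End R R[X])
  (hL : ∀ k : ℕ, 1 ≤ k → L (X ^ k) = ((k : R) - 1) • X ^ k + X ^ (k + 1))
include hL

lemma spanPosPow_le_comap : spanPosPow R ≤ (spanPosPow R).comap L := by
  refine Submodule.span_le.mpr ?_
  rintro _ ⟨j, rfl⟩
  rw [SetLike.mem_coe, Submodule.mem_comap, hL (j + 1) (by omega)]
  exact add_mem (Submodule.smul_mem _ _ (Submodule.subset_span ⟨j, rfl⟩))
    (Submodule.subset_span ⟨j + 1, rfl⟩)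

lemma apply_X_mul_of_mem {p : R[X]} (hp : p ∈ spanPosPow R) : L (X * p) = X * (L + 1) p := by
  have hgen : Set.EqOn (L ∘ₗ LinearMap.mulLeft R X) (LinearMap.mulLeft R X ∘ₗ (L + 1))
      (Set.range fun j : ℕ => X ^ (j + 1)) := by
    rintro _ ⟨j, rfl⟩
    change L (X * X ^ (j + 1)) = X * (L (X ^ (j + 1)) + X ^ (j + 1))
    rw [← pow_succ', hL _ (by omega), hL _ (by omega), mul_add, mul_add, mul_smul_comm,
      ← pow_succ', ← pow_succ']
    push_cast
    module
  exact LinearMap.eqOn_span' hgen hp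

lemma add_one_pow_apply_mem {p : R[X]} (hp : p ∈ spanPosPow R) (n : ℕ) :
    ((L + 1) ^ n) p ∈ spanPosPow R := by
  induction n with
  | zero => exact hp
  | succ n ih =>
    rw [pow_succ', Module.End.mul_apply, LinearMap.add_apply, Module.End.one_apply]
    exact add_mem (spanPosPow_le_comap L hL ih) ih

lemma pow_apply_X_mul_of_mem {p : R[X]} (hp : p ∈ spanPosPow R) (n : ℕ) :
    (L ^ n) (X * p) = X * ((L + 1) ^ n) p := by
  induction n with
  | zero => rfl
  | succ n ih =>
    rw [pow_succ', Module.End.mul_apply, ih,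
      apply_X_mul_of_mem L hL (add_one_pow_apply_mem L hL hp n), pow_succ', Module.End.mul_apply]

end BellRule

lemma Module.End.add_one_pow_apply {R M : Type*} [Semiring R] [AddCommMonoid M] [Module R M]
    (A : Module.End R M) (n : ℕ) (m : M) :
    ((A + 1) ^ n) m = ∑ k ∈ Finset.range (n + 1), n.choose k • (A ^ k) m := by
  rw [(Commute.one_right A).add_pow, LinearMap.sum_apply]
  simp only [one_pow, mul_one, Module.End.mul_apply, Module.End.natCast_apply]
  exact Finset.sum_congr rfl fun k _ => (map_nsmul _ _ _)

/-- For the Bell rule operator `L` and the associated family of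
sequences `f n b = [L^n(X^b)]_{X=1}`, one has, for `b ≥ 1` and every `n`,
`f_n^{(b+1)} = Σ_{k=0}^{n} C(n,k) f_k^{(b)}`, i.e. the sequence with axiom
`b+1` is the binomial transform of the sequence with axiom `b`. -/
theorem bell_sequence_binomial_transform
    (L : Module.End ℝ (Polynomial ℝ))
    (hL : ∀ k : ℕ, 1 ≤ k → L (X ^ k) = ((k : ℝ) - 1) • X ^ k + X ^ (k + 1))
    (f : ℕ → ℕ → ℝ) (hf : ∀ n b, f n b = ((L ^ n) (X ^ b)).eval 1)
    (b : ℕ) (hb : 1 ≤ b) (n : ℕ) :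
    f n (b + 1) = ∑ k ∈ Finset.range (n + 1), (Nat.choose n k : ℝ) * f k b := by
  rw [hf, pow_succ' X b,
    BellRule.pow_apply_X_mul_of_mem L hL (BellRule.X_pow_mem_spanPosPow hb),
    Module.End.add_one_pow_apply, eval_mul, eval_X, one_mul, eval_finsetSum]
  simp only [nsmul_eq_mul, eval_mul, eval_natCast, hf]
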